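/- arXiv:1907.02798 — 4 statements merged into one kernel-verified Lean document; each statement's English description precedes it below -/
import Mathlib

section
/- Let k and n be integers with 2 ≤ k ≤ n, and let G be a group such that [γ_k(G), γ_n(G)] is finite and |x^{γ_n(G)}| ≤ m for every x ∈ G. Then for every γ_n-value g ∈ X_n(G) one has |g^{γ_{k-1}(G)}| ≤ m^{n-k+2} · |[γ_k(G), γ_n(G)]|. -/
/-- The set of conjugates of `x` by elements of `S`: `x^S = {x^s : s ∈ S}`. -/
def conjSet {G : Type*} [Group G] (x : G) (S : Set G) : Set G :=
  (fun s => s⁻¹ * x * s) '' S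

/-- The commutator `[a,b] = a⁻¹b⁻¹ab`. -/
def commP {G : Type*} [Group G] (a b : G) : G := a⁻¹ * b⁻¹ * a * b

/-- `gammaVals G k` is the set of `γ_{k+1}`-values in `G`, i.e. elements of the form
`[x_1,…,x_{k+1}]` (left-normed commutators); so `X_n(G) = gammaVals G (n-1)`. -/
def gammaVals (G : Type*) [Group G] : ℕ → Set G
  | 0 => Set.univ
  | k + 1 => {z | ∃ x ∈ gammaVals G k, ∃ y : G, z = commP x y}


/-!
Write `T = [γ_k, γ_n]`, a normal subgroup. For a `γ_n`-value `g = [w, x]` and `h ∈ γ_{k-1}`,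
put `c = [w, h] ∈ γ_n` and `d = [h, x⁻¹]`, which lies one step deeper in the lower central series
than `h`. A commutator identity gives `[g, h] ≡ [c, x] · [w, d]^x` modulo `T`.
Since `|x^{γ_n}| ≤ m`, the factor `[c, x]` takes at most `m` values, and `[w, d]` is a commutator of
a shorter `γ`-value with an element of a deeper term, so induction on the weight of `w` (ending
with conjugation by `γ_n` itself) puts all of `[g, γ_{k-1}]` in at most `m ^ (n - k + 2)` cosets
of `T`. Finally `g^{γ_{k-1}} = g · [g, γ_{k-1}]`.
-/

open Subgroup Pointwise
open scoped commutatorElement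

lemma Set.ncard_mul_le_of_finite {M : Type*} [Mul M] {s t : Set M} (hs : s.Finite)
    (ht : t.Finite) : (s * t).ncard ≤ s.ncard * t.ncard := by
  rw [← Set.image2_mul, ← Set.image_prod, ← Set.ncard_prod]
  exact Set.ncard_image_le (hs.prod ht)

section Commutators

variable {G : Type*} [Group G]

lemma commP_mem_commutator {H K : Subgroup G} {a b : G} (ha : a ∈ H) (hb : b ∈ K) :
    commP a b ∈ ⁅H, K⁆ := by
  have : commP a b = ⁅a⁻¹, b⁻¹⁆ := by simp [commP, commutatorElement_def, mul_assoc]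
  exact this ▸ commutator_mem_commutator (inv_mem ha) (inv_mem hb)

lemma commP_commP_eq (w x h : G) :
    commP (commP w x) h =
      commP (commP w x) (commP w h) * commP (commP w h) x *
        (x⁻¹ * commP w (commP h x⁻¹) * x) *
        (x⁻¹ * (commP (commP w (commP h x⁻¹)) (commP w h) *
          commP (commP w h) (commP h x⁻¹)) * x) := by
  simp only [commP]
  group

lemma conjSet_eq_smul_image_commP (g : G) (S : Set G) :
    conjSet g S = g • (commP g ·) '' S := by
  simp only [conjSet, ← Set.image_smul, Set.image_image, smul_eq_mul, commP, mul_assoc,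
    mul_inv_cancel_left]

lemma image_commP_left_eq_image_conjSet (x : G) (S : Set G) :
    (commP · x) '' S = (fun v => v⁻¹ * x) '' conjSet x S := by
  simp only [conjSet, Set.image_image, commP, mul_inv_rev, inv_inv, mul_assoc]

lemma mul_mul_mem_mul_of_normal {T : Subgroup G} [T.Normal] {S : Set G} {s t t' : G}
    (hs : s ∈ S) (ht : t ∈ T) (ht' : t' ∈ T) : t * s * t' ∈ S * (T : Set G) :=
  ⟨s, hs, s⁻¹ * t * s * t', mul_mem (by simpa using Normal.conj_mem ‹_› t ht s⁻¹) ht', by group⟩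

end Commutators

section LowerCentralSeries

variable {G : Type*} [Group G]

lemma Subgroup.commutator_commutator_le_of_rotate {H₁ H₂ H₃ N : Subgroup G} [N.Normal]
    (h1 : ⁅⁅H₂, H₃⁆, H₁⁆ ≤ N) (h2 : ⁅⁅H₃, H₁⁆, H₂⁆ ≤ N) : ⁅⁅H₁, H₂⁆, H₃⁆ ≤ N := by
  have h_bot {K₁ K₂ K₃ : Subgroup G} (h : ⁅⁅K₁, K₂⁆, K₃⁆ ≤ N) :
      ⁅⁅K₁.map (QuotientGroup.mk' N), K₂.map (QuotientGroup.mk' N)⁆,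
        K₃.map (QuotientGroup.mk' N)⁆ = ⊥ := by
    rwa [← map_commutator, ← map_commutator, map_eq_bot_iff, QuotientGroup.ker_mk']
  have h3 := commutator_commutator_eq_bot_of_rotate (h_bot h1) (h_bot h2)
  rwa [← map_commutator, ← map_commutator, map_eq_bot_iff, QuotientGroup.ker_mk'] at h3

lemma Subgroup.commutator_lowerCentralSeries_le (a b : ℕ) :
    ⁅(⊤ : Subgroup G).lowerCentralSeries a, (⊤ : Subgroup G).lowerCentralSeries b⁆ ≤
      (⊤ : Subgroup G).lowerCentralSeries (a + b + 1) := by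
  induction a generalizing b with
  | zero => rw [lowerCentralSeries_zero, commutator_comm, zero_add, lowerCentralSeries_succ]
  | succ a ih =>
    rw [lowerCentralSeries_succ]
    apply commutator_commutator_le_of_rotate
    · rw [commutator_comm ⊤, ← lowerCentralSeries_succ, commutator_comm]
      exact (ih (b + 1)).trans_eq (congrArg _ (by omega))
    · rw [commutator_comm (lowerCentralSeries ⊤ b)]
      exact (commutator_mono (ih b) le_rfl).trans_eq
        ((lowerCentralSeries_succ ⊤ _).symm.trans (congrArg _ (by omega)))

lemma gammaVals_subset_lowerCentralSeries (r : ℕ) :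
    gammaVals G r ⊆ ((⊤ : Subgroup G).lowerCentralSeries r : Set G) := by
  induction r with
  | zero => exact fun g _ => mem_top g
  | succ r ih =>
    rintro _ ⟨w, hw, y, rfl⟩
    exact commP_mem_commutator (ih hw) (mem_top y)

end LowerCentralSeries

section ConjugacyBound

variable {G : Type*} [Group G]

/-- In the paper's indexing: `w ∈ X_{r+i+1}`, `h ∈ γ_{p+1}`, and the cosets are those of
`[γ_{a+1}, γ_{b+1}]`. -/
lemma exists_finite_commP_cover {m a b r : ℕ}
    (hconj : ∀ x : G, (conjSet x ((⊤ : Subgroup G).lowerCentralSeries b : Set G)).Finite ∧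
      (conjSet x ((⊤ : Subgroup G).lowerCentralSeries b : Set G)).ncard ≤ m)
    (har : a ≤ r + 1) {i p : ℕ} (hpi : p + i = b) (hap : a ≤ p + 1) :
    ∀ w ∈ gammaVals G (r + i), ∃ A : Set G, A.Finite ∧ A.ncard ≤ m ^ (i + 1) ∧
      commP w '' ((⊤ : Subgroup G).lowerCentralSeries p : Set G) ⊆
        A * ((⁅(⊤ : Subgroup G).lowerCentralSeries a, (⊤ : Subgroup G).lowerCentralSeries b⁆ :
          Subgroup G) : Set G) := by
  induction i generalizing p with
  | zero =>
    obtain rfl : p = b := hpi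
    intro w _
    refine ⟨w⁻¹ • conjSet w _, (hconj w).1.smul_set, by simpa using (hconj w).2, ?_⟩
    rw [conjSet_eq_smul_image_commP, inv_smul_smul]
    exact Set.subset_mul_left _ (one_mem _)
  | succ i ih =>
    rintro _ ⟨w, hw, x, rfl⟩
    replace hw : w ∈ gammaVals G (r + i) := hw
    obtain ⟨A, hA, hAm, hAcover⟩ := ih (p := p + 1) (by omega) (by omega) w hw
    have hΦ : ((commP · x) '' ((⊤ : Subgroup G).lowerCentralSeries b : Set G)).Finite ∧
        ((commP · x) '' ((⊤ : Subgroup G).lowerCentralSeries b : Set G)).ncard ≤ m := by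
      rw [image_commP_left_eq_image_conjSet]
      exact ⟨(hconj x).1.image _, (Set.ncard_image_le (hconj x).1).trans (hconj x).2⟩
    refine ⟨_ * (fun a => x⁻¹ * a * x) '' A, hΦ.1.mul (hA.image _), ?_, ?_⟩
    · calc _ ≤ _ * _ := Set.ncard_mul_le_of_finite hΦ.1 (hA.image _)
        _ ≤ m * m ^ (i + 1) := Nat.mul_le_mul hΦ.2 ((Set.ncard_image_le hA).trans hAm)
        _ = m ^ (i + 1 + 1) := by ring
    rintro _ ⟨h, hh, rfl⟩
    set T := ⁅(⊤ : Subgroup G).lowerCentralSeries a, (⊤ : Subgroup G).lowerCentralSeries b⁆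
    have hw' := gammaVals_subset_lowerCentralSeries (r + i) hw
    have hc : commP w h ∈ (⊤ : Subgroup G).lowerCentralSeries b :=
      (⊤ : Subgroup G).lowerCentralSeries_antitone (by omega)
        (commutator_lowerCentralSeries_le _ _ (commP_mem_commutator hw' hh))
    have hd : commP h x⁻¹ ∈ (⊤ : Subgroup G).lowerCentralSeries (p + 1) :=
      commP_mem_commutator hh (mem_top _)
    have hβ : commP w (commP h x⁻¹) ∈ (⊤ : Subgroup G).lowerCentralSeries a :=
      (⊤ : Subgroup G).lowerCentralSeries_antitone (by omega)
        (commutator_lowerCentralSeries_le _ _ (commP_mem_commutator hw' hd))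
    have hu : commP w x ∈ (⊤ : Subgroup G).lowerCentralSeries a :=
      (⊤ : Subgroup G).lowerCentralSeries_antitone (show a ≤ r + i + 1 by omega)
        (commP_mem_commutator hw' (mem_top x))
    obtain ⟨a', ha', t, ht, hat⟩ := Set.mem_mul.mp (hAcover ⟨_, hd, rfl⟩)
    replace hd := (⊤ : Subgroup G).lowerCentralSeries_antitone hap hd
    rw [commP_commP_eq]
    generalize commP w h = c at hc ⊢
    generalize commP h x⁻¹ = d at hd hat hβ ⊢
    rw [← hat] at hβ ⊢
    have hs : commP c x * (x⁻¹ * a' * x) ∈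
        (commP · x) '' ((⊤ : Subgroup G).lowerCentralSeries b : Set G) *
          (fun a => x⁻¹ * a * x) '' A :=
      Set.mul_mem_mul ⟨c, hc, rfl⟩ ⟨a', ha', rfl⟩
    have hT : x⁻¹ * t * x * (x⁻¹ * (commP (a' * t) c * commP c d) * x) ∈ T :=
      mul_mem (by simpa using Normal.conj_mem inferInstance t ht x⁻¹)
        (by simpa using Normal.conj_mem inferInstance _ (mul_mem (commP_mem_commutator hβ hc)
          ((commutator_comm _ _).le (commP_mem_commutator hc hd))) x⁻¹)
    convert mul_mul_mem_mul_of_normal hs (commP_mem_commutator hu hc) hT using 1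
    group

end ConjugacyBound

/-- Let `2 ≤ k ≤ n` and let `G` be a group such that `[γ_k(G), γ_n(G)]` is finite and
`|x^{γ_n(G)}| ≤ m` for every `x ∈ G`. Then for every `γ_n`-value `g ∈ X_n(G)` one has
`|g^{γ_{k-1}(G)}| ≤ m^(n-k+2) * |[γ_k(G), γ_n(G)]|`. -/
theorem bounded_conjugates_in_gamma_pred (m k n : ℕ) (hk : 2 ≤ k) (hkn : k ≤ n)
    (G : Type*) [Group G]
    (hfin : Finite (⁅(⊤ : Subgroup G).lowerCentralSeries (k - 1), (⊤ : Subgroup G).lowerCentralSeries (n - 1)⁆ : Subgroup G))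
    (hconj : ∀ x : G,
      (conjSet x (((⊤ : Subgroup G).lowerCentralSeries (n - 1) : Subgroup G) : Set G)).Finite ∧
      (conjSet x (((⊤ : Subgroup G).lowerCentralSeries (n - 1) : Subgroup G) : Set G)).ncard ≤ m) :
    ∀ g ∈ gammaVals G (n - 1),
      (conjSet g (((⊤ : Subgroup G).lowerCentralSeries (k - 2) : Subgroup G) : Set G)).Finite ∧
      (conjSet g (((⊤ : Subgroup G).lowerCentralSeries (k - 2) : Subgroup G) : Set G)).ncard ≤
        m ^ (n - k + 2) *
          Nat.card (⁅(⊤ : Subgroup G).lowerCentralSeries (k - 1), (⊤ : Subgroup G).lowerCentralSeries (n - 1)⁆ : Subgroup G) := by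
  intro g hg
  obtain ⟨A, hA, hAm, hcover⟩ := exists_finite_commP_cover (a := k - 1) (r := k - 2)
    (i := n - k + 1) (p := k - 2) hconj (by omega) (by omega) (by omega) g
    (by rwa [show k - 2 + (n - k + 1) = n - 1 by omega])
  have hT := Set.toFinite
    ((⁅(⊤ : Subgroup G).lowerCentralSeries (k - 1), (⊤ : Subgroup G).lowerCentralSeries (n - 1)⁆ :
      Subgroup G) : Set G)
  have hsub := conjSet_eq_smul_image_commP g _ ▸ Set.smul_set_mono (a := g) hcover
  refine ⟨((hA.mul hT).smul_set).subset hsub, ?_⟩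
  calc _ ≤ _ := Set.ncard_le_ncard hsub (hA.mul hT).smul_set
    _ = _ := Set.ncard_smul_set _ _
    _ ≤ _ := Set.ncard_mul_le_of_finite hA hT
    _ ≤ _ := Nat.mul_le_mul hAm (Nat.card_coe_set_eq _).ge
end

section
/- Let k and n be integers with 2 ≤ k ≤ n, and let G be a group such that [γ_k(G), γ_n(G)] = 1 and |x^{γ_n(G)}| ≤ m for every x ∈ G. Then for every integer d with k−1 ≤ d ≤ n and every γ_{n−d+1}-value g ∈ G, one has |g^{γ_d(G)}| ≤ m^{n−d+1}. -/
/-! Induction on the weight of the value. Write a `γ_{j+1}`-value as `g = [x, y]` with `x` a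
`γ_j`-value, and let `h ∈ γ_{n-j}`. Then `u = [y, h] ∈ γ_{n-j+1} ≤ γ_k` and `z = [x, h] ∈ γ_n`, so
`u` centralizes every conjugate of `z`, and this makes `g^h` a fixed function of the pair
`((y⁻¹xy)^u, (x⁻¹y⁻¹x)^z)`. Since `y⁻¹xy` is again a `γ_j`-value, there are at most
`m^j · m` such pairs. -/

open scoped commutatorElement

namespace Subgroup

variable {G : Type*} [Group G]

theorem commutator_commutator_le_of_rotate_s7 {H₁ H₂ H₃ N : Subgroup G} [N.Normal]
    (h1 : ⁅⁅H₂, H₃⁆, H₁⁆ ≤ N) (h2 : ⁅⁅H₃, H₁⁆, H₂⁆ ≤ N) : ⁅⁅H₁, H₂⁆, H₃⁆ ≤ N := by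
  rw [← QuotientGroup.ker_mk' N, ← map_eq_bot_iff] at h1 h2 ⊢
  simp only [map_commutator] at h1 h2 ⊢
  exact commutator_commutator_eq_bot_of_rotate h1 h2

theorem commutator_lowerCentralSeries_le_s7 (i j : ℕ) :
    ⁅(⊤ : Subgroup G).lowerCentralSeries i, (⊤ : Subgroup G).lowerCentralSeries j⁆ ≤
      (⊤ : Subgroup G).lowerCentralSeries (i + j + 1) := by
  induction j generalizing i with
  | zero => exact le_rfl
  | succ j ih =>
    rw [commutator_comm]
    refine commutator_commutator_le_of_rotate_s7 ?_ (commutator_mono (ih i) le_rfl)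
    rw [commutator_comm ⊤]
    exact (ih (i + 1)).trans_eq (by rw [Nat.add_right_comm i 1 j, Nat.add_assoc i j 1])

end Subgroup

theorem Set.encard_image2_le {α β γ : Type*} (f : α → β → γ) (s : Set α) (t : Set β) :
    (Set.image2 f s t).encard ≤ s.encard * t.encard := by
  rw [← Set.image_uncurry_prod, ← Set.encard_prod]
  exact Set.encard_image_le _ _

section

variable {G : Type*} [Group G]

theorem commP_eq_commutatorElement (a b : G) : commP a b = ⁅a⁻¹, b⁻¹⁆ := by
  simp [commP, commutatorElement_def]

theorem conj_commP (t a b : G) : t⁻¹ * commP a b * t = commP (t⁻¹ * a * t) (t⁻¹ * b * t) := by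
  simp only [commP]; group

local notation "γ" => Subgroup.lowerCentralSeries (⊤ : Subgroup G)

theorem commP_mem_lowerCentralSeries {i j : ℕ} {a b : G} (ha : a ∈ γ i) (hb : b ∈ γ j) :
    commP a b ∈ γ (i + j + 1) := by
  rw [commP_eq_commutatorElement]
  exact Subgroup.commutator_lowerCentralSeries_le_s7 i j
    (Subgroup.commutator_mem_commutator (inv_mem ha) (inv_mem hb))

theorem gammaVals_subset_lowerCentralSeries_s7 : ∀ j, gammaVals G j ⊆ γ j
  | 0 => fun x _ => Subgroup.mem_top x
  | j + 1 => by
    rintro _ ⟨x, hx, y, rfl⟩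
    simpa only [Nat.add_zero, SetLike.mem_coe] using
      commP_mem_lowerCentralSeries (j := 0) (gammaVals_subset_lowerCentralSeries_s7 j hx)
        (Subgroup.mem_top y)

theorem conj_mem_gammaVals (t : G) : ∀ {j : ℕ} {x : G}, x ∈ gammaVals G j →
    t⁻¹ * x * t ∈ gammaVals G j
  | 0, _, _ => Set.mem_univ _
  | _ + 1, _, ⟨a, ha, b, rfl⟩ => ⟨_, conj_mem_gammaVals t ha, _, conj_commP t a b⟩

theorem conj_commP_eq (x y h : G)
    (hcomm : ∀ t : G, Commute (commP y h) (t⁻¹ * commP x h * t)) :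
    h⁻¹ * commP x y * h =
      x⁻¹ * ((commP y h)⁻¹ * (y⁻¹ * x * y) * commP y h) *
        ((commP x y)⁻¹ * ((commP x h)⁻¹ * (x⁻¹ * y⁻¹ * x) * commP x h) * y) := by
  set u := commP y h
  set z := commP x h
  set g := commP x y
  have hxh : h⁻¹ * x * h = x * z := by simp only [z, commP]; group
  have hyh : h⁻¹ * y * h = y * u := by simp only [u, commP]; group
  calc h⁻¹ * g * h = x⁻¹ * (x * z⁻¹ * x⁻¹) * u⁻¹ * (y⁻¹ * x * y) * ((y⁻¹ * z * y) * u) := by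
        rw [conj_commP, hxh, hyh]; simp only [commP]; group
    _ = x⁻¹ * (u⁻¹ * (x⁻¹⁻¹ * z * x⁻¹)⁻¹) * (y⁻¹ * x * y) * (u * (y⁻¹ * z * y)) := by
        rw [(hcomm y).eq, ((hcomm x⁻¹).inv_left.inv_right).eq]; group
    _ = x⁻¹ * u⁻¹ * (y⁻¹ * x * y) * ((g⁻¹ * z * g)⁻¹ * u) * (y⁻¹ * z * y) := by
        simp only [g, commP]; group
    _ = x⁻¹ * (u⁻¹ * (y⁻¹ * x * y) * u) * (g⁻¹ * (z⁻¹ * (x⁻¹ * y⁻¹ * x) * z) * y) := by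
        rw [← ((hcomm g).inv_right).eq]; simp only [g, commP]; group

theorem conjSet_commP_subset_image2 {x y : G} {H U : Set G} {Z : Subgroup G} [Z.Normal]
    (hU : ∀ h ∈ H, commP y h ∈ U) (hZ : ∀ h ∈ H, commP x h ∈ Z)
    (hUZ : ∀ u ∈ U, ∀ z ∈ Z, Commute u z) :
    conjSet (commP x y) H ⊆ Set.image2 (fun a b => x⁻¹ * a * ((commP x y)⁻¹ * b * y))
      (conjSet (y⁻¹ * x * y) U) (conjSet (x⁻¹ * y⁻¹ * x) Z) := by
  rintro _ ⟨h, hh, rfl⟩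
  refine ⟨_, ⟨_, hU h hh, rfl⟩, _, ⟨_, hZ h hh, rfl⟩, (conj_commP_eq x y h fun t => ?_).symm⟩
  exact hUZ _ (hU h hh) _ (by simpa using Subgroup.Normal.conj_mem ‹_› _ (hZ h hh) t⁻¹)

/-- `γ i` is the paper's `γ_{i+1}`, and `gammaVals G j` are the `γ_{j+1}`-values. -/
theorem encard_conjSet_gammaVals_le {K N : ℕ} {m : ℕ∞}
    (hcomm : ∀ u ∈ γ K, ∀ z ∈ γ N, Commute u z)
    (hconj : ∀ x : G, (conjSet x (γ N)).encard ≤ m) :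
    ∀ j i : ℕ, i + j = N → K ≤ i + 1 →
      ∀ g ∈ gammaVals G j, (conjSet g (γ i)).encard ≤ m ^ (j + 1)
  | 0, i, hN, _, g, _ => by simpa [← hN] using hconj g
  | j + 1, i, hN, hK, _, ⟨x, hx, y, rfl⟩ => by
    have hsub := conjSet_commP_subset_image2 (H := γ i) (U := γ (i + 1)) (Z := γ N)
      (fun h hh => Subgroup.lowerCentralSeries_antitone _ (by omega)
        (commP_mem_lowerCentralSeries (i := 0) (Subgroup.mem_top y) hh))
      (fun h hh => Subgroup.lowerCentralSeries_antitone _ (by omega)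
        (commP_mem_lowerCentralSeries (gammaVals_subset_lowerCentralSeries_s7 j hx) hh))
      (fun u hu z hz => hcomm u (Subgroup.lowerCentralSeries_antitone _ hK hu) z hz)
    calc _ ≤ _ := Set.encard_le_encard hsub
      _ ≤ _ := Set.encard_image2_le _ _ _
      _ ≤ m ^ (j + 1) * m := mul_le_mul'
          (encard_conjSet_gammaVals_le hcomm hconj j (i + 1) (by omega) (by omega) _
            (conj_mem_gammaVals y hx))
          (hconj _)
      _ = m ^ (j + 2) := (pow_succ m (j + 1)).symm

end

theorem bounded_conjugates_in_gamma_d_general (m k n : ℕ) (hk : 2 ≤ k)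
    (G : Type*) [Group G]
    (htriv : (⁅(⊤ : Subgroup G).lowerCentralSeries (k - 1), (⊤ : Subgroup G).lowerCentralSeries (n - 1)⁆ : Subgroup G) = ⊥)
    (hconj : ∀ x : G,
      (conjSet x (((⊤ : Subgroup G).lowerCentralSeries (n - 1) : Subgroup G) : Set G)).Finite ∧
      (conjSet x (((⊤ : Subgroup G).lowerCentralSeries (n - 1) : Subgroup G) : Set G)).ncard ≤ m) :
    ∀ d : ℕ, k - 1 ≤ d → d ≤ n →
      ∀ g ∈ gammaVals G (n - d),
        (conjSet g (((⊤ : Subgroup G).lowerCentralSeries (d - 1) : Subgroup G) : Set G)).Finite ∧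
        (conjSet g (((⊤ : Subgroup G).lowerCentralSeries (d - 1) : Subgroup G) : Set G)).ncard ≤
          m ^ (n - d + 1) := by
  intro d hkd hdn g hg
  have hcomm : ∀ u ∈ (⊤ : Subgroup G).lowerCentralSeries (k - 1),
      ∀ z ∈ (⊤ : Subgroup G).lowerCentralSeries (n - 1), Commute u z := fun u hu z hz =>
    (Subgroup.commutator_eq_bot_iff_le_centralizer.mp htriv hu z hz).symm
  rw [← Set.encard_le_coe_iff_finite_ncard_le, Nat.cast_pow]
  exact encard_conjSet_gammaVals_le hcomm
    (fun x => Set.encard_le_coe_iff_finite_ncard_le.mpr (hconj x)) (n - d) (d - 1)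
    (by omega) (by omega) g hg

/-- Let `2 ≤ k ≤ n` and let `G` be a group such that `[γ_k(G), γ_n(G)] = 1` and
`|x^{γ_n(G)}| ≤ m` for every `x ∈ G`. Then for every integer `d` with `k-1 ≤ d ≤ n` and
every `γ_{n-d+1}`-value `g ∈ G`, one has `|g^{γ_d(G)}| ≤ m^(n-d+1)`. -/
theorem bounded_conjugates_in_gamma_d (m k n : ℕ) (hk : 2 ≤ k) (hkn : k ≤ n)
    (G : Type*) [Group G]
    (htriv : (⁅(⊤ : Subgroup G).lowerCentralSeries (k - 1), (⊤ : Subgroup G).lowerCentralSeries (n - 1)⁆ : Subgroup G) = ⊥)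
    (hconj : ∀ x : G,
      (conjSet x (((⊤ : Subgroup G).lowerCentralSeries (n - 1) : Subgroup G) : Set G)).Finite ∧
      (conjSet x (((⊤ : Subgroup G).lowerCentralSeries (n - 1) : Subgroup G) : Set G)).ncard ≤ m) :
    ∀ d : ℕ, k - 1 ≤ d → d ≤ n →
      ∀ g ∈ gammaVals G (n - d),
        (conjSet g (((⊤ : Subgroup G).lowerCentralSeries (d - 1) : Subgroup G) : Set G)).Finite ∧
        (conjSet g (((⊤ : Subgroup G).lowerCentralSeries (d - 1) : Subgroup G) : Set G)).ncard ≤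
          m ^ (n - d + 1) :=
  bounded_conjugates_in_gamma_d_general m k n hk G htriv hconj
end

section
/- Let H be a group generated by a set X with X = X^{-1}, and let K be a subgroup of finite index m in H. Then every coset Kb of K in H contains an element g that can be written as a product of at most m−1 elements of X (where the empty product is the identity). -/
/-!
Let `H` act on the `m` left cosets of `K`. The cosets reached from `K` by words of length `≤ n`
in `X` form an increasing chain; once two consecutive terms agree the chain is constant, and since
`X = X⁻¹` generates `H` as a monoid, its constant value is the set of all cosets. The chain starts
with one coset and grows by at least one per step until it stabilises, so it is everything by
step `m - 1`. A word `w` lies in `K b` iff the inverse word, again a word in `X`, sends `K` to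
`b⁻¹ K`.
-/

theorem Set.exists_lt_card_eq_succ_of_monotone {α : Type*} [Finite α] {f : ℕ → Set α}
    (hf : Monotone f) (h0 : (f 0).Nonempty) : ∃ n < Nat.card α, f n = f (n + 1) := by
  by_contra! hne
  have hcard : ∀ n ≤ Nat.card α, n + 1 ≤ (f n).ncard := by
    intro n hn
    induction n with
    | zero => exact (Set.ncard_pos (Set.toFinite _)).mpr h0
    | succ n ih =>
      have hssub : f n ⊂ f (n + 1) := (hf (Nat.le_add_right n 1)).lt_of_ne (hne n (by omega))
      have := Set.ncard_lt_ncard hssub (Set.toFinite _)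
      have := ih (by omega)
      omega
  have := hcard _ le_rfl
  have := Set.ncard_le_card (f (Nat.card α))
  omega

namespace MulAction

variable {M α : Type*} [Monoid M] [MulAction M α]

/-- The ball of radius `n` around `a` in the Schreier graph of the action with respect to `X`. -/
def wordBall (X : Set M) (a : α) (n : ℕ) : Set α :=
  {b | ∃ l : List M, (∀ x ∈ l, x ∈ X) ∧ l.length ≤ n ∧ l.prod • a = b}

variable {X : Set M} {a b : α} {n : ℕ}

theorem wordBall_mono : Monotone (wordBall X a) :=
  fun _ _ hmn _ ⟨l, hlX, hlen, hl⟩ => ⟨l, hlX, hlen.trans hmn, hl⟩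

theorem self_mem_wordBall : a ∈ wordBall X a n :=
  ⟨[], by simp, by simp, by simp⟩

theorem smul_mem_wordBall_succ {x : M} (hx : x ∈ X) (hb : b ∈ wordBall X a n) :
    x • b ∈ wordBall X a (n + 1) := by
  obtain ⟨l, hlX, hlen, rfl⟩ := hb
  refine ⟨x :: l, ?_, by simpa using hlen, by rw [List.prod_cons, mul_smul]⟩
  simpa [List.forall_mem_cons] using ⟨hx, hlX⟩

theorem mem_wordBall_succ :
    b ∈ wordBall X a (n + 1) ↔ b = a ∨ ∃ x ∈ X, ∃ c ∈ wordBall X a n, b = x • c := by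
  constructor
  · rintro ⟨_ | ⟨x, l⟩, hlX, hlen, rfl⟩
    · simp
    · simp only [List.mem_cons, forall_eq_or_imp] at hlX
      exact .inr ⟨x, hlX.1, l.prod • a, ⟨l, hlX.2, by simpa using hlen, rfl⟩,
        by rw [List.prod_cons, mul_smul]⟩
  · rintro (rfl | ⟨x, hx, c, hc, rfl⟩)
    · exact self_mem_wordBall
    · exact smul_mem_wordBall_succ hx hc

theorem wordBall_succ_eq_succ_succ (h : wordBall X a n = wordBall X a (n + 1)) :
    wordBall X a (n + 1) = wordBall X a (n + 2) := by
  refine (wordBall_mono (by omega)).antisymm fun b hb => ?_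
  rcases mem_wordBall_succ.mp hb with rfl | ⟨x, hx, c, hc, rfl⟩
  · exact self_mem_wordBall
  · exact smul_mem_wordBall_succ hx (h ▸ hc)

theorem wordBall_add_eq (h : wordBall X a n = wordBall X a (n + 1)) (k : ℕ) :
    wordBall X a (n + k) = wordBall X a n := by
  have hstep : ∀ k, wordBall X a (n + k) = wordBall X a (n + k + 1) :=
    Nat.rec h fun _ => wordBall_succ_eq_succ_succ
  induction k with
  | zero => rfl
  | succ k ih => rw [← add_assoc, ← hstep, ih]

theorem orbit_subset_wordBall_of_eq_succ (hX : Submonoid.closure X = ⊤)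
    (h : wordBall X a n = wordBall X a (n + 1)) : orbit M a ⊆ wordBall X a n := by
  rintro _ ⟨g, rfl⟩
  obtain ⟨l, hlX, rfl⟩ := Submonoid.exists_list_of_mem_closure (hX ▸ Submonoid.mem_top g)
  rw [← wordBall_add_eq h l.length]
  exact ⟨l, hlX, by omega, rfl⟩

theorem orbit_subset_wordBall_card_sub_one [Finite α] (hX : Submonoid.closure X = ⊤) (a : α) :
    orbit M a ⊆ wordBall X a (Nat.card α - 1) := by
  obtain ⟨n, hn, h⟩ :=
    Set.exists_lt_card_eq_succ_of_monotone (wordBall_mono (X := X) (a := a)) ⟨a, self_mem_wordBall⟩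
  exact (orbit_subset_wordBall_of_eq_succ hX h).trans (wordBall_mono (by omega))

end MulAction

theorem Submonoid.closure_eq_top_of_inv_eq {G : Type*} [Group G] {X : Set G} (hsym : X⁻¹ = X)
    (hgen : Subgroup.closure X = ⊤) : Submonoid.closure X = ⊤ := by
  rw [← Subgroup.top_toSubmonoid, ← hgen, Subgroup.closure_toSubmonoid, hsym, Set.union_self]

theorem List.exists_prod_eq_inv_of_inv_eq {G : Type*} [Group G] {X : Set G} (hsym : X⁻¹ = X)
    {l : List G} (hl : ∀ x ∈ l, x ∈ X) :
    ∃ l' : List G, (∀ x ∈ l', x ∈ X) ∧ l'.length = l.length ∧ l'.prod = l.prod⁻¹ := by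
  refine ⟨(l.map (·⁻¹)).reverse, ?_, by simp, (List.prod_inv_reverse l).symm⟩
  simp only [List.mem_reverse, List.mem_map, forall_exists_index, and_imp]
  rintro _ x hx rfl
  exact hsym ▸ Set.inv_mem_inv.mpr (hl x hx)

/-- Let `H` be a group generated by a set `X` with `X = X⁻¹`, and let `K` be a subgroup of
finite index `m` in `H`. Then every coset `Kb` of `K` in `H` contains an element `g` that can
be written as a product of at most `m-1` elements of `X` (the empty product being `1`). -/
theorem short_coset_representatives (H : Type*) [Group H] (X : Set H)
    (hsym : X⁻¹ = X) (hgen : Subgroup.closure X = ⊤)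
    (K : Subgroup H) (m : ℕ) (hm : 0 < m) (hindex : K.index = m) :
    ∀ b : H, ∃ g : H, (∃ k ∈ K, g = k * b) ∧
      ∃ l : List H, (∀ x ∈ l, x ∈ X) ∧ l.length ≤ m - 1 ∧ l.prod = g := by
  intro b
  have : Finite (H ⧸ K) := Subgroup.index_ne_zero_iff_finite.mp (hindex ▸ hm.ne')
  obtain ⟨l, hlX, hlen, hl⟩ :=
    MulAction.orbit_subset_wordBall_card_sub_one (Submonoid.closure_eq_top_of_inv_eq hsym hgen)
      ((1 : H) : H ⧸ K) (MulAction.mem_orbit _ b⁻¹)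
  rw [← Subgroup.index_eq_card, hindex] at hlen
  obtain ⟨l', hl'X, hl'len, hl'⟩ := List.exists_prod_eq_inv_of_inv_eq hsym hlX
  refine ⟨l.prod⁻¹, ⟨l.prod⁻¹ * b⁻¹, ?_, by group⟩, l', hl'X, hl'len ▸ hlen, hl'⟩
  simp only [MulAction.Quotient.smul_mk, smul_eq_mul, mul_one] at hl
  exact QuotientGroup.eq.mp hl
end

section
/- For all integers k, m, n ≥ 2 and every positive integer c there exists a constant C = C(m,n,c) such that: if G is any group in which |x^{γ_n(G)}| ≤ m for every x ∈ G and [γ_k(G), γ_n(G)] is finite with |[γ_k(G), γ_n(G)]| ≤ c, then for every x ∈ γ_{k−1}(G) the subgroup [γ_n(G), x] has order at most C. -/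
/-- `[H, a]`: the subgroup generated by all commutators `[h,a]` with `h ∈ H`. -/
def commSub {G : Type*} [Group G] (H : Subgroup G) (a : G) : Subgroup G :=
  Subgroup.closure {z | ∃ h ∈ H, z = commP h a}

/-! Modulo `K = ⁅γ_k(G), N⁆` with `N = γ_n(G)`, the map `h ↦ [h, x]` is a homomorphism on `N`:
`[h h', x] = [h, x]^{h'} [h', x]`, and `[h, x] ∈ γ_k(G)` commutes with `h' ∈ N` modulo `K`.
So the image of `[N, x]` in `G/K` is the image of `{[h, x] : h ∈ N} = (x⁻¹)^N x`, which has at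
most `m` elements, while the kernel `[N, x] ∩ K` has at most `c`; hence `|[N, x]| ≤ m c`. -/

open scoped commutatorElement

section

variable {G : Type*} [Group G]

theorem commP_eq_inv_commutatorElement (h x : G) : commP h x = ⁅x⁻¹, h⁻¹⁆⁻¹ := by
  simp only [commP, commutatorElement_def]; group

theorem commP_mul (h h' x : G) : commP (h * h') x = h'⁻¹ * commP h x * h' * commP h' x := by
  simp only [commP]; group

theorem commP_mem_lowerCentralSeries_succ {S : Subgroup G} {x h : G} {j : ℕ}
    (hx : x ∈ S.lowerCentralSeries j) (hh : h ∈ S) : commP h x ∈ S.lowerCentralSeries (j + 1) := by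
  rw [commP_eq_inv_commutatorElement]
  exact inv_mem (Subgroup.commutator_mem_commutator (inv_mem hx) (inv_mem hh))

theorem Subgroup.finite_and_card_le_card_map_mul_card_ker {Q : Type*} [Group Q]
    (H : Subgroup G) (f : G →* Q) [Finite (H.map f)] [Finite f.ker] :
    Finite H ∧ Nat.card H ≤ Nat.card (H.map f) * Nat.card f.ker := by
  have hcard : Nat.card H = Nat.card (f.ker.subgroupOf H) * Nat.card (H.map f) := by
    rw [← MonoidHom.ker_domRestrict, ← MonoidHom.domRestrict_range, ← Subgroup.index_ker,
      Subgroup.card_mul_index]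
  have hinj : Function.Injective (fun y : f.ker.subgroupOf H => (⟨y.1.1, y.2⟩ : f.ker)) :=
    fun y z hyz => Subtype.ext <| Subtype.ext <| congrArg (fun w : f.ker => (w : G)) hyz
  have : Finite (f.ker.subgroupOf H) := Finite.of_injective _ hinj
  refine ⟨Nat.finite_of_card_ne_zero ?_, ?_⟩
  · rw [hcard]; exact mul_ne_zero Nat.card_pos.ne' Nat.card_pos.ne'
  · rw [hcard, mul_comm]; exact Nat.mul_le_mul_left _ (Nat.card_le_card_of_injective _ hinj)

section CommPHom

variable {N L : Subgroup G} [N.Normal] [L.Normal] {x : G}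

def commPHom (hxL : ∀ h ∈ N, commP h x ∈ L) : N →* G ⧸ ⁅L, N⁆ where
  toFun h := QuotientGroup.mk (commP (h : G) x)
  map_one' := by simp [commP]
  map_mul' h h' := by
    have hcomm : Commute (QuotientGroup.mk (commP (h : G) x) : G ⧸ ⁅L, N⁆) (h' : G) := by
      rw [← commutatorElement_eq_one_iff_commute, ← QuotientGroup.mk'_apply,
        ← QuotientGroup.mk'_apply, ← map_commutatorElement, QuotientGroup.mk'_apply,
        QuotientGroup.eq_one_iff]
      exact Subgroup.commutator_mem_commutator (hxL _ h.2) h'.2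
    simp only [Subgroup.coe_mul, commP_mul, QuotientGroup.mk_mul, QuotientGroup.mk_inv,
      hcomm.symm.inv_mul_cancel]

theorem range_commPHom (hxL : ∀ h ∈ N, commP h x ∈ L) :
    ((commPHom hxL).range : Set (G ⧸ ⁅L, N⁆)) =
      (fun t => (QuotientGroup.mk (t * x) : G ⧸ ⁅L, N⁆)) '' conjSet x⁻¹ N := by
  ext q
  simp [commPHom, conjSet, commP]

theorem map_commSub_eq_range_commPHom (hxL : ∀ h ∈ N, commP h x ∈ L) :
    (commSub N x).map (QuotientGroup.mk' ⁅L, N⁆) = (commPHom hxL).range := by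
  rw [commSub, MonoidHom.map_closure, ← (commPHom hxL).range.closure_eq]
  congr 1
  ext q
  simp [commPHom]

theorem finite_and_card_commSub_le (hxL : ∀ h ∈ N, commP h x ∈ L)
    (hx : (conjSet x⁻¹ N).Finite) [Finite (⁅L, N⁆ : Subgroup G)] :
    Finite (commSub N x) ∧
      Nat.card (commSub N x) ≤ (conjSet x⁻¹ N).ncard * Nat.card (⁅L, N⁆ : Subgroup G) := by
  have hrange : ((commSub N x).map (QuotientGroup.mk' ⁅L, N⁆) : Set (G ⧸ ⁅L, N⁆)) =
      (fun t => (QuotientGroup.mk (t * x) : G ⧸ ⁅L, N⁆)) '' conjSet x⁻¹ N := by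
    rw [map_commSub_eq_range_commPHom hxL, range_commPHom]
  have : Finite ((commSub N x).map (QuotientGroup.mk' ⁅L, N⁆)) := by
    rw [← SetLike.coe_sort_coe, hrange]; exact (hx.image _).to_subtype
  have : Finite (QuotientGroup.mk' ⁅L, N⁆).ker := by
    rw [QuotientGroup.ker_mk']; infer_instance
  have hmap :
      Nat.card ((commSub N x).map (QuotientGroup.mk' ⁅L, N⁆)) ≤ (conjSet x⁻¹ N).ncard := by
    rw [← SetLike.coe_sort_coe, hrange, Nat.card_coe_set_eq]; exact Set.ncard_image_le hx
  obtain ⟨hfin, hcard⟩ :=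
    (commSub N x).finite_and_card_le_card_map_mul_card_ker (QuotientGroup.mk' ⁅L, N⁆)
  rw [QuotientGroup.ker_mk'] at hcard
  exact ⟨hfin, hcard.trans (Nat.mul_le_mul_right _ hmap)⟩

end CommPHom

end

theorem bounded_commutator_with_element_general (k m n : ℕ) (c : ℕ) :
    ∃ C : ℕ, ∀ (G : Type*) [Group G],
      (∀ x : G,
        (conjSet x (((⊤ : Subgroup G).lowerCentralSeries (n - 1) : Subgroup G) : Set G)).Finite ∧
        (conjSet x (((⊤ : Subgroup G).lowerCentralSeries (n - 1) : Subgroup G) : Set G)).ncard ≤ m) →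
      Finite (⁅(⊤ : Subgroup G).lowerCentralSeries (k - 1), (⊤ : Subgroup G).lowerCentralSeries (n - 1)⁆ : Subgroup G) →
      Nat.card (⁅(⊤ : Subgroup G).lowerCentralSeries (k - 1), (⊤ : Subgroup G).lowerCentralSeries (n - 1)⁆ : Subgroup G) ≤ c →
      ∀ x ∈ (⊤ : Subgroup G).lowerCentralSeries (k - 2),
        Finite (commSub ((⊤ : Subgroup G).lowerCentralSeries (n - 1)) x) ∧
        Nat.card (commSub ((⊤ : Subgroup G).lowerCentralSeries (n - 1)) x) ≤ C := by
  refine ⟨m * c, fun G _ hconj _ hcard x hx => ?_⟩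
  have hxL : ∀ h ∈ (⊤ : Subgroup G).lowerCentralSeries (n - 1),
      commP h x ∈ (⊤ : Subgroup G).lowerCentralSeries (k - 1) := fun h _ =>
    Subgroup.lowerCentralSeries_antitone _ (by omega)
      (commP_mem_lowerCentralSeries_succ hx (Subgroup.mem_top h))
  obtain ⟨hfin, hle⟩ := finite_and_card_commSub_le hxL (hconj x⁻¹).1
  exact ⟨hfin, hle.trans (Nat.mul_le_mul (hconj x⁻¹).2 hcard)⟩

/-- For all integers `k, m, n ≥ 2` and every positive integer `c` there exists `C = C(m,n,c)`
such that: if `G` is any group in which `|x^{γ_n(G)}| ≤ m` for every `x ∈ G` and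
`[γ_k(G), γ_n(G)]` is finite of order at most `c`, then for every `x ∈ γ_{k-1}(G)` the
subgroup `[γ_n(G), x]` has order at most `C`. -/
theorem bounded_commutator_with_element (k m n : ℕ) (hk : 2 ≤ k) (hm : 2 ≤ m) (hn : 2 ≤ n)
    (c : ℕ) (hc : 0 < c) :
    ∃ C : ℕ, ∀ (G : Type*) [Group G],
      (∀ x : G,
        (conjSet x (((⊤ : Subgroup G).lowerCentralSeries (n - 1) : Subgroup G) : Set G)).Finite ∧
        (conjSet x (((⊤ : Subgroup G).lowerCentralSeries (n - 1) : Subgroup G) : Set G)).ncard ≤ m) →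
      Finite (⁅(⊤ : Subgroup G).lowerCentralSeries (k - 1), (⊤ : Subgroup G).lowerCentralSeries (n - 1)⁆ : Subgroup G) →
      Nat.card (⁅(⊤ : Subgroup G).lowerCentralSeries (k - 1), (⊤ : Subgroup G).lowerCentralSeries (n - 1)⁆ : Subgroup G) ≤ c →
      ∀ x ∈ (⊤ : Subgroup G).lowerCentralSeries (k - 2),
        Finite (commSub ((⊤ : Subgroup G).lowerCentralSeries (n - 1)) x) ∧
        Nat.card (commSub ((⊤ : Subgroup G).lowerCentralSeries (n - 1)) x) ≤ C :=
  bounded_commutator_with_element_general k m n c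
end
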